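/- Let M = {v_1^{m_1}, ..., v_ℓ^{m_ℓ}} be a multiset with distinct ranks and multiplicities m_i, let n_0 = 0, n_i = m_1 + ... + m_i, and let θ = (θ_1, ..., θ_ℓ) and η = (η_1, ..., η_ℓ), where θ_i, η_i are permutations of [n_{i-1}+1, n_i] for each i. Then for every σ, π ∈ S(M), d_K(T_θ(σ), T_η(π)) ≥ d_K(σ, π) + Σ_{i=1}^{ℓ} d_K(θ_i, η_i). -/

import Mathlib

/-- `AdjTrans σ π` : the sequence `π` is obtained from the sequence `σ` by exchanging
two distinct adjacent elements (an adjacent transposition). -/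
def AdjTrans (σ π : List ℤ) : Prop :=
  ∃ (l₁ l₂ : List ℤ) (a b : ℤ), a ≠ b ∧ σ = l₁ ++ a :: b :: l₂ ∧ π = l₁ ++ b :: a :: l₂

/-- `StepsTo n σ π` : `π` can be obtained from `σ` by a sequence of `n` adjacent
transpositions. -/
def StepsTo : ℕ → List ℤ → List ℤ → Prop
  | 0 => fun σ π => σ = π
  | n + 1 => fun σ π => ∃ τ, AdjTrans σ τ ∧ StepsTo n τ π

/-- The Kendall τ-distance between two sequences: the minimum number of adjacent
transpositions needed to transform one into the other. -/
noncomputable def dK (σ π : List ℤ) : ℕ := sInf {n | StepsTo n σ π}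

/-- The list `[a, a+1, ..., a+len-1]` of integers. -/
def rangeList (a len : ℕ) : List ℤ := (List.range' a len).map (fun x => (x : ℤ))

/-- The substitution map `T_θ`: the `r`-th occurrence (from the left, `0`-indexed) of a
rank `a` in `σ` is replaced by the `r`-th entry of the list `θ a`. -/
def Tmap (θ : ℤ → List ℤ) (σ : List ℤ) : List ℤ :=
  (List.range σ.length).map (fun j =>
    (θ (σ.getD j 0)).getD ((σ.take j).count (σ.getD j 0)) 0)

/-- `psiEntry σ a s` : the number of positions in `σ` strictly to the right of the `s`-th
occurrence (`0`-indexed) of `a` in `σ` that hold an element smaller than `a`. -/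
def psiEntry (σ : List ℤ) (a : ℤ) (s : ℕ) : ℕ :=
  (σ.drop (((σ.indexesOf a).getD s σ.length) + 1)).countP (fun x => decide (x < a))

/-- The Manhattan distance between two vectors of naturals (presented as lists). -/
def manhattanL (x y : List ℕ) : ℕ :=
  ∑ i ∈ Finset.range (max x.length y.length), ((x.getD i 0 : ℤ) - (y.getD i 0 : ℤ)).natAbs

/-- The Lee distance over `Z_q` between two vectors with entries in `{0, …, q-1}`
(presented as lists). -/
def leeDistL (q : ℕ) (x y : List ℕ) : ℕ :=
  ∑ i ∈ Finset.range (max x.length y.length),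
    min (((x.getD i 0 : ℤ) - (y.getD i 0 : ℤ)).natAbs)
      (q - ((x.getD i 0 : ℤ) - (y.getD i 0 : ℤ)).natAbs)

/-- The Lee distance between two vectors over `ZMod q`. -/
def zmodLee {q N : ℕ} (x y : Fin N → ZMod q) : ℕ :=
  ∑ i, min (x i - y i).val (y i - x i).val

/-- `permList k σ` : `σ` is (an ordering representing) a permutation of `{1, …, k}`. -/
def permList (k : ℕ) (σ : List ℤ) : Prop :=
  (↑σ : Multiset ℤ) = (↑(rangeList 1 k) : Multiset ℤ)

/-- The multiset `M_{k,r} = {0^k, k+1, …, k+r}`. -/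
def Mkr (k r : ℕ) : Multiset ℤ :=
  Multiset.replicate k (0 : ℤ) + (↑(rangeList (k + 1) r) : Multiset ℤ)

/-- `α_{↓k}` : delete from `α` all elements larger than `k`. -/
def restrictTo (k : ℕ) (α : List ℤ) : List ℤ :=
  α.filter (fun x => decide (x ≤ (k : ℤ)))

/-- `α_{k↦0}` : replace in `α` every element of `{1, …, k}` by `0`. -/
def mapToZero (k : ℕ) (α : List ℤ) : List ℤ :=
  α.map (fun x => if 1 ≤ x ∧ x ≤ (k : ℤ) then 0 else x)

/-- `star σ ρ = σ ∗ ρ` : replace the zeros of `ρ`, from left to right, by the elements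
of `σ` in order. -/
def starP : List ℤ → List ℤ → List ℤ
  | _, [] => []
  | σ, x :: ρ' => if x = 0 then σ.headD 0 :: starP σ.tail ρ' else x :: starP σ ρ'

/-!
Colour every label by the rank it replaces. In a sequence of adjacent transpositions
from `T_θ(σ)` to `T_η(π)`, a swap of two labels of different colours is a swap in the
underlying sequence of ranks and leaves every colour class in place, while a swap of two
labels of the same colour leaves the ranks in place and moves only that colour class.
The ranks go from `σ` to `π` and colour class `v i` goes from `θ_i` to `η_i`, so a
shortest such sequence has at least `d_K(σ, π) + ∑ d_K(θ_i, η_i)` swaps.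
-/

open List

theorem StepsTo.trans {m n : ℕ} {A B C : List ℤ} (h₁ : StepsTo m A B) (h₂ : StepsTo n B C) :
    StepsTo (m + n) A C := by
  induction m generalizing A with
  | zero => cases h₁; simpa using h₂
  | succ m ih =>
    obtain ⟨τ, hAτ, hτB⟩ := h₁
    rw [Nat.succ_add]
    exact ⟨τ, hAτ, ih hτB⟩

theorem AdjTrans.cons {A B : List ℤ} (x : ℤ) (h : AdjTrans A B) :
    AdjTrans (x :: A) (x :: B) := by
  obtain ⟨l₁, l₂, a, b, hab, rfl, rfl⟩ := h
  exact ⟨x :: l₁, l₂, a, b, hab, rfl, rfl⟩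

theorem StepsTo.cons {n : ℕ} {A B : List ℤ} (x : ℤ) (h : StepsTo n A B) :
    StepsTo n (x :: A) (x :: B) := by
  induction n generalizing A with
  | zero => cases h; rfl
  | succ n ih =>
    obtain ⟨τ, hAτ, hτB⟩ := h
    exact ⟨x :: τ, hAτ.cons x, ih hτB⟩

theorem AdjTrans.perm {A B : List ℤ} (h : AdjTrans A B) : A ~ B := by
  obtain ⟨l₁, l₂, a, b, -, rfl, rfl⟩ := h
  exact (Perm.swap b a l₂).append_left l₁

theorem StepsTo.perm {n : ℕ} {A B : List ℤ} (h : StepsTo n A B) : A ~ B := by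
  induction n generalizing A with
  | zero => cases h; rfl
  | succ n ih =>
    obtain ⟨τ, hAτ, hτB⟩ := h
    exact hAτ.perm.trans (ih hτB)

theorem exists_stepsTo_of_perm {A B : List ℤ} (h : A ~ B) : ∃ n, StepsTo n A B := by
  induction h with
  | nil => exact ⟨0, rfl⟩
  | cons x _ ih =>
    obtain ⟨n, hn⟩ := ih
    exact ⟨n, hn.cons x⟩
  | swap x y l =>
    by_cases hxy : x = y
    · exact ⟨0, by subst hxy; rfl⟩
    · exact ⟨1, _, ⟨[], l, y, x, Ne.symm hxy, rfl, rfl⟩, rfl⟩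
  | trans _ _ ih₁ ih₂ =>
    obtain ⟨m, hm⟩ := ih₁
    obtain ⟨n, hn⟩ := ih₂
    exact ⟨m + n, hm.trans hn⟩

theorem dK_le {n : ℕ} {A B : List ℤ} (h : StepsTo n A B) : dK A B ≤ n := Nat.sInf_le h

theorem stepsTo_dK {A B : List ℤ} (h : A ~ B) : StepsTo (dK A B) A B :=
  Nat.sInf_mem (exists_stepsTo_of_perm h)

theorem dK_self (A : List ℤ) : dK A A = 0 := Nat.le_zero.mp (dK_le (n := 0) rfl)

theorem dK_le_dK_add_one {A τ B : List ℤ} (h : AdjTrans A τ) (hτB : τ ~ B) :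
    dK A B ≤ dK τ B + 1 :=
  dK_le ⟨τ, h, stepsTo_dK hτB⟩

theorem filter_append_cons_cons_comm (p : ℤ → Bool) (l₁ l₂ : List ℤ) {a b : ℤ}
    (h : ¬(p a ∧ p b)) :
    (l₁ ++ a :: b :: l₂).filter p = (l₁ ++ b :: a :: l₂).filter p := by
  simp only [filter_append, filter_cons]
  cases ha : p a <;> cases hb : p b <;> simp_all

section Splitting

variable (c : ℤ → ℤ) (s : Finset ℤ)

noncomputable def splitDist (A B : List ℤ) : ℕ :=
  dK (A.map c) (B.map c) + ∑ k ∈ s, dK (A.filter (c · = k)) (B.filter (c · = k))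

theorem splitDist_le_of_adjTrans {A τ B : List ℤ} (h : AdjTrans A τ) (hτB : τ ~ B) :
    splitDist c s A B ≤ splitDist c s τ B + 1 := by
  obtain ⟨l₁, l₂, a, b, hab, rfl, rfl⟩ := h
  unfold splitDist
  by_cases hc : c a = c b
  · have hmap : (l₁ ++ a :: b :: l₂).map c = (l₁ ++ b :: a :: l₂).map c := by simp [hc]
    have hclass : ∀ k, dK ((l₁ ++ a :: b :: l₂).filter (c · = k)) (B.filter (c · = k)) ≤
        dK ((l₁ ++ b :: a :: l₂).filter (c · = k)) (B.filter (c · = k)) +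
          if k = c a then 1 else 0 := by
      intro k
      split_ifs with hk
      · subst hk
        refine dK_le_dK_add_one ⟨l₁.filter (c · = c a), l₂.filter (c · = c a), a, b, hab,
          ?_, ?_⟩ (hτB.filter _) <;> simp [hc]
      · rw [filter_append_cons_cons_comm _ _ _ (by simp [Ne.symm hk]), add_zero]
    have hsum := Finset.sum_le_sum fun k (_ : k ∈ s) => hclass k
    rw [Finset.sum_add_distrib, Finset.sum_ite_eq'] at hsum
    rw [hmap]
    split_ifs at hsum <;> omega
  · have hmap : dK ((l₁ ++ a :: b :: l₂).map c) (B.map c) ≤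
        dK ((l₁ ++ b :: a :: l₂).map c) (B.map c) + 1 :=
      dK_le_dK_add_one ⟨l₁.map c, l₂.map c, c a, c b, hc, by simp, by simp⟩ (hτB.map c)
    have hclass : ∀ k, (l₁ ++ a :: b :: l₂).filter (c · = k) =
        (l₁ ++ b :: a :: l₂).filter (c · = k) := fun k =>
      filter_append_cons_cons_comm _ _ _ (by simp only [decide_eq_true_eq]; grind)
    simp only [hclass]
    omega

theorem splitDist_le_of_stepsTo {n : ℕ} {A B : List ℤ} (h : StepsTo n A B) :
    splitDist c s A B ≤ n := by
  induction n generalizing A with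
  | zero => cases h; simp [splitDist, dK_self]
  | succ n ih =>
    obtain ⟨τ, hAτ, hτB⟩ := h
    exact (splitDist_le_of_adjTrans c s hAτ hτB.perm).trans (by have := ih hτB; omega)

theorem splitDist_le_dK {A B : List ℤ} (h : A ~ B) : splitDist c s A B ≤ dK A B :=
  splitDist_le_of_stepsTo c s (stepsTo_dK h)

theorem perm_of_perm_map_of_perm_filter {A B : List ℤ} (hmap : A.map c ~ B.map c)
    (hclass : ∀ k ∈ A.map c, A.filter (c · = k) ~ B.filter (c · = k)) : A ~ B := by
  refine perm_iff_count.mpr fun y => ?_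
  by_cases hy : c y ∈ A.map c
  · have hyy : (fun x => decide (c x = c y)) y = true := decide_eq_true rfl
    rw [← count_filter (p := fun x => decide (c x = c y)) (l := A) hyy,
      ← count_filter (p := fun x => decide (c x = c y)) (l := B) hyy]
    exact (perm_iff_count.mp (hclass _ hy)) y
  · have hyB : c y ∉ B.map c := fun h => hy (hmap.mem_iff.mpr h)
    rw [count_eq_zero_of_not_mem fun h => hy (mem_map_of_mem h),
      count_eq_zero_of_not_mem fun h => hyB (mem_map_of_mem h)]

end Splitting

theorem Tmap_cons (θ : ℤ → List ℤ) (a : ℤ) (s : List ℤ) :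
    Tmap θ (a :: s) = (θ a).getD 0 0 :: Tmap (Function.update θ a (θ a).tail) s := by
  unfold Tmap
  rw [length_cons, range_succ_eq_map, map_cons, map_map]
  congr 1
  refine map_congr_left fun j _ => ?_
  simp only [Function.comp_apply, getD_cons_succ, take_succ_cons]
  by_cases hj : s.getD j 0 = a
  · rw [hj, Function.update_self, count_cons_self]
    simp only [getD_eq_getElem?_getD, getElem?_tail]
  · rw [Function.update_of_ne hj, count_cons_of_ne (Ne.symm hj)]

def Relabels (c : ℤ → ℤ) (θ : ℤ → List ℤ) (s : List ℤ) : Prop :=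
  ∀ x ∈ s, (θ x).length = s.count x ∧ ∀ y ∈ θ x, c y = x

section Relabelling

variable {c : ℤ → ℤ} {θ : ℤ → List ℤ} {a : ℤ} {s : List ℤ}

theorem Relabels.update_tail (h : Relabels c θ (a :: s)) :
    Relabels c (Function.update θ a (θ a).tail) s := by
  intro x hx
  obtain ⟨hlen, hc⟩ := h x (mem_cons_of_mem a hx)
  by_cases hxa : x = a
  · subst hxa
    rw [Function.update_self, length_tail, hlen, count_cons_self, Nat.add_sub_cancel]
    exact ⟨rfl, fun y hy => hc y (mem_of_mem_tail hy)⟩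
  · rw [Function.update_of_ne hxa, count_cons_of_ne (Ne.symm hxa)] at *
    exact ⟨hlen, hc⟩

theorem Relabels.eq_cons (h : Relabels c θ (a :: s)) :
    θ a = (θ a).getD 0 0 :: (θ a).tail := by
  have hlen := (h a mem_cons_self).1
  rw [count_cons_self] at hlen
  cases hθa : θ a with
  | nil => simp [hθa] at hlen
  | cons y ys => rfl

theorem map_Tmap (h : Relabels c θ s) : (Tmap θ s).map c = s := by
  induction s generalizing θ with
  | nil => rfl
  | cons a s ih =>
    rw [Tmap_cons, map_cons, ih h.update_tail,
      (h a mem_cons_self).2 _ (h.eq_cons ▸ mem_cons_self)]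

theorem filter_Tmap (h : Relabels c θ s) (k : ℤ) :
    (Tmap θ s).filter (c · = k) = (θ k).take (s.count k) := by
  induction s generalizing θ with
  | nil => simp [Tmap]
  | cons a s ih =>
    have hhead : c ((θ a).getD 0 0) = a := (h a mem_cons_self).2 _ (h.eq_cons ▸ mem_cons_self)
    rw [Tmap_cons, filter_cons, ih h.update_tail, hhead]
    by_cases hak : a = k
    · subst hak
      rw [decide_eq_true rfl, if_pos rfl, Function.update_self, count_cons_self]
      conv_rhs => rw [h.eq_cons, take_succ_cons]
    · rw [decide_eq_false hak, if_neg (by simp), Function.update_of_ne (Ne.symm hak),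
        count_cons_of_ne hak]

end Relabelling

theorem Multiset.count_sum_replicate_of_injOn {ι α : Type*} [DecidableEq α] {t : Finset ι}
    {v : ι → α} (hv : Set.InjOn v t) (m : ι → ℕ) {i : ι} (hi : i ∈ t) :
    (∑ j ∈ t, Multiset.replicate (m j) (v j)).count (v i) = m i := by
  rw [Multiset.count_sum', Finset.sum_eq_single_of_mem i hi fun j hj hji => ?_,
    Multiset.count_replicate_self]
  exact Multiset.count_eq_zero.mpr fun h => hji (hv hj hi (Multiset.eq_of_mem_replicate h).symm)

theorem Multiset.exists_of_mem_sum_replicate {ι α : Type*} {t : Finset ι} {v : ι → α}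
    {m : ι → ℕ} {x : α} (hx : x ∈ ∑ j ∈ t, Multiset.replicate (m j) (v j)) :
    ∃ i ∈ t, v i = x := by
  obtain ⟨i, hi, hxi⟩ := Multiset.mem_sum.mp hx
  exact ⟨i, hi, (Multiset.eq_of_mem_replicate hxi).symm⟩

theorem Nat.findGreatest_cast_lt_eq {S : ℕ → ℕ} (hS : Monotone S) {ℓ i : ℕ} {y : ℤ}
    (hi : i ≤ ℓ) (hlo : (S i : ℤ) < y) (hhi : y ≤ S (i + 1)) :
    Nat.findGreatest (fun j => (S j : ℤ) < y) ℓ = i := by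
  refine Nat.findGreatest_eq_iff.mpr ⟨hi, fun _ => hlo, fun j hij _ => not_lt.mpr ?_⟩
  exact hhi.trans (by exact_mod_cast hS hij)

theorem length_rangeList (a len : ℕ) : (rangeList a len).length = len := by
  simp [rangeList]

theorem mem_rangeList {a len : ℕ} {y : ℤ} :
    y ∈ rangeList a len ↔ a ≤ y ∧ y < a + len := by
  simp only [rangeList, pure_def, bind_eq_flatMap, map_id_fun', id_eq, mem_flatMap, mem_range'_1,
    mem_singleton]
  constructor
  · rintro ⟨k, hk, rfl⟩
    omega
  · intro h
    exact ⟨y.toNat, by omega, by omega⟩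

section Blocks

variable {ℓ : ℕ} {v : ℕ → ℤ} {m : ℕ → ℕ}

/-- The label blocks `[n_j + 1, n_{j+1}]` are consecutive, so the block containing `y` is the
last one that starts below `y`. -/
def blockRank (ℓ : ℕ) (v : ℕ → ℤ) (m : ℕ → ℕ) (y : ℤ) : ℤ :=
  v (Nat.findGreatest (fun j => ((∑ k ∈ Finset.range j, m k : ℕ) : ℤ) < y) ℓ)

theorem blockRank_eq {i : ℕ} (hi : i < ℓ) {y : ℤ}
    (hy : y ∈ rangeList ((∑ k ∈ Finset.range i, m k) + 1) (m i)) :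
    blockRank ℓ v m y = v i := by
  have hS : Monotone fun j => ∑ k ∈ Finset.range j, m k := fun _ _ h =>
    Finset.sum_le_sum_of_subset (Finset.range_subset_range.mpr h)
  rw [mem_rangeList] at hy
  rw [blockRank, Nat.findGreatest_cast_lt_eq hS hi.le (by omega)
    (by rw [Finset.sum_range_succ]; omega)]

variable {θ : ℤ → List ℤ} {σ : List ℤ}
  (hv : Set.InjOn v (Finset.range ℓ))
  (hθ : ∀ i, i < ℓ → (↑(θ (v i)) : Multiset ℤ) =
    (↑(rangeList ((∑ j ∈ Finset.range i, m j) + 1) (m i)) : Multiset ℤ))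
  (hσ : (↑σ : Multiset ℤ) = ∑ i ∈ Finset.range ℓ, Multiset.replicate (m i) (v i))
include hv hθ hσ

theorem count_eq_length_of_blocks {i : ℕ} (hi : i < ℓ) :
    σ.count (v i) = (θ (v i)).length := by
  rw [← Multiset.coe_count, hσ,
    Multiset.count_sum_replicate_of_injOn hv m (Finset.mem_range.mpr hi),
    ← Multiset.coe_card, hθ i hi, Multiset.coe_card, length_rangeList]

theorem relabels_blockRank : Relabels (blockRank ℓ v m) θ σ := by
  intro x hx
  obtain ⟨i, hi, rfl⟩ := Multiset.exists_of_mem_sum_replicate (hσ ▸ Multiset.mem_coe.mpr hx)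
  have hi := Finset.mem_range.mp hi
  refine ⟨(count_eq_length_of_blocks hv hθ hσ hi).symm, fun y hy => blockRank_eq hi ?_⟩
  rw [← Multiset.mem_coe, hθ i hi, Multiset.mem_coe] at hy
  exact hy

theorem filter_Tmap_blockRank (i : ℕ) (hi : i < ℓ) :
    (Tmap θ σ).filter (blockRank ℓ v m · = v i) = θ (v i) := by
  rw [filter_Tmap (relabels_blockRank hv hθ hσ), count_eq_length_of_blocks hv hθ hσ hi,
    take_length]

end Blocks

theorem stmt1_general (ℓ : ℕ) (v : ℕ → ℤ) (m : ℕ → ℕ)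
    (hv : ∀ i j, i < j → j < ℓ → v i < v j)
    (θ η : ℤ → List ℤ)
    (hθ : ∀ i, i < ℓ → (↑(θ (v i)) : Multiset ℤ) =
      (↑(rangeList ((∑ j ∈ Finset.range i, m j) + 1) (m i)) : Multiset ℤ))
    (hη : ∀ i, i < ℓ → (↑(η (v i)) : Multiset ℤ) =
      (↑(rangeList ((∑ j ∈ Finset.range i, m j) + 1) (m i)) : Multiset ℤ))
    (σ π : List ℤ)
    (hσ : (↑σ : Multiset ℤ) = ∑ i ∈ Finset.range ℓ, Multiset.replicate (m i) (v i))
    (hπ : (↑π : Multiset ℤ) = ∑ i ∈ Finset.range ℓ, Multiset.replicate (m i) (v i)) :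
    dK σ π + ∑ i ∈ Finset.range ℓ, dK (θ (v i)) (η (v i)) ≤ dK (Tmap θ σ) (Tmap η π) := by
  have hvinj : Set.InjOn v (Finset.range ℓ) := by
    rw [Finset.coe_range]
    exact StrictMonoOn.injOn fun i _ j hj hij => hv i j hij hj
  have hθσ := relabels_blockRank hvinj hθ hσ
  have hηπ := relabels_blockRank hvinj hη hπ
  have hθclass := filter_Tmap_blockRank hvinj hθ hσ
  have hηclass := filter_Tmap_blockRank hvinj hη hπ
  have hperm : Tmap θ σ ~ Tmap η π := by
    refine perm_of_perm_map_of_perm_filter (blockRank ℓ v m) ?_ fun k hk => ?_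
    · rw [map_Tmap hθσ, map_Tmap hηπ]
      exact Multiset.coe_eq_coe.mp (hσ.trans hπ.symm)
    · rw [map_Tmap hθσ] at hk
      obtain ⟨i, hi, rfl⟩ :=
        Multiset.exists_of_mem_sum_replicate (hσ ▸ Multiset.mem_coe.mpr hk)
      have hi := Finset.mem_range.mp hi
      rw [hθclass i hi, hηclass i hi]
      exact Multiset.coe_eq_coe.mp ((hθ i hi).trans (hη i hi).symm)
  calc dK σ π + ∑ i ∈ Finset.range ℓ, dK (θ (v i)) (η (v i))
      = splitDist (blockRank ℓ v m) ((Finset.range ℓ).image v) (Tmap θ σ) (Tmap η π) := by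
        rw [splitDist, map_Tmap hθσ, map_Tmap hηπ, Finset.sum_image hvinj]
        refine congrArg _ (Finset.sum_congr rfl fun i hi => ?_)
        rw [hθclass i (Finset.mem_range.mp hi), hηclass i (Finset.mem_range.mp hi)]
    _ ≤ dK (Tmap θ σ) (Tmap η π) := splitDist_le_dK _ _ hperm

/-- Lemma 2. With `M`, `v`, `m` as before and `θ (v i)`, `η (v i)`
permutations of the interval `[n_{i-1}+1, n_i]` for each `i < ℓ`, for every
`σ, π ∈ S(M)` one has
`d_K(T_θ(σ), T_η(π)) ≥ d_K(σ, π) + ∑_{i} d_K(θ_i, η_i)`. -/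
theorem stmt1 (ℓ : ℕ) (v : ℕ → ℤ) (m : ℕ → ℕ)
    (hv : ∀ i j, i < j → j < ℓ → v i < v j)
    (hm : ∀ i, i < ℓ → 0 < m i)
    (θ η : ℤ → List ℤ)
    (hθ : ∀ i, i < ℓ → (↑(θ (v i)) : Multiset ℤ) =
      (↑(rangeList ((∑ j ∈ Finset.range i, m j) + 1) (m i)) : Multiset ℤ))
    (hη : ∀ i, i < ℓ → (↑(η (v i)) : Multiset ℤ) =
      (↑(rangeList ((∑ j ∈ Finset.range i, m j) + 1) (m i)) : Multiset ℤ))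
    (σ π : List ℤ)
    (hσ : (↑σ : Multiset ℤ) = ∑ i ∈ Finset.range ℓ, Multiset.replicate (m i) (v i))
    (hπ : (↑π : Multiset ℤ) = ∑ i ∈ Finset.range ℓ, Multiset.replicate (m i) (v i)) :
    dK σ π + ∑ i ∈ Finset.range ℓ, dK (θ (v i)) (η (v i)) ≤ dK (Tmap θ σ) (Tmap η π) :=
  stmt1_general ℓ v m hv θ η hθ hη σ π hσ hπ
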